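/- arXiv:math/0511509 — 3 statements merged into one kernel-verified Lean document; each statement's English description precedes it below -/
import Mathlib

section
/- Suppose β, γ, and a sequence θ_0, ..., θ_d in a field K satisfy θ_{i-1} - β·θ_i + θ_{i+1} = γ for all 1 ≤ i ≤ d-1 with d ≥ 2. If additionally θ_i² - β·θ_i·θ_{i-1} + θ_{i-1}² - γ(θ_i + θ_{i-1}) = ϱ holds for i = 1, then it holds for all 1 ≤ i ≤ d. -/
/-! The quadratic form `q(x, y) = x² - βxy + y² - γ(x + y)` satisfies
`q(c, b) - q(b, a) = (c - a)(a - βb + c - γ)`, so along any three consecutive terms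
obeying the recurrence the invariant does not change; induct on `i`. -/

theorem quadratic_invariant_eq_of_recurrence {R : Type*} [CommRing R] {β γ a b c : R}
    (h : a - β * b + c = γ) :
    c ^ 2 - β * c * b + b ^ 2 - γ * (c + b) = b ^ 2 - β * b * a + a ^ 2 - γ * (b + a) := by
  linear_combination (c - a) * h

theorem stmt3_general {K : Type*} [Field K] (d : ℕ) (β γ ϱ : K)
    (θ : ℕ → K)
    (hrec : ∀ i : ℕ, 1 ≤ i → i ≤ d - 1 → θ (i - 1) - β * θ i + θ (i + 1) = γ)
    (h1 : θ 1 ^ 2 - β * θ 1 * θ 0 + θ 0 ^ 2 - γ * (θ 1 + θ 0) = ϱ) :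
    ∀ i : ℕ, 1 ≤ i → i ≤ d →
      θ i ^ 2 - β * θ i * θ (i - 1) + θ (i - 1) ^ 2 - γ * (θ i + θ (i - 1)) = ϱ := by
  intro i hi hid
  induction i, hi using Nat.le_induction with
  | base => exact h1
  | succ n hn ih =>
    rw [Nat.add_sub_cancel, ← ih (by omega)]
    exact quadratic_invariant_eq_of_recurrence (hrec n hn (by omega))

theorem stmt3 {K : Type*} [Field K] (d : ℕ) (hd : 2 ≤ d) (β γ ϱ : K)
    (θ : ℕ → K)
    (hrec : ∀ i : ℕ, 1 ≤ i → i ≤ d - 1 → θ (i - 1) - β * θ i + θ (i + 1) = γ)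
    (h1 : θ 1 ^ 2 - β * θ 1 * θ 0 + θ 0 ^ 2 - γ * (θ 1 + θ 0) = ϱ) :
    ∀ i : ℕ, 1 ≤ i → i ≤ d →
      θ i ^ 2 - β * θ i * θ (i - 1) + θ (i - 1) ^ 2 - γ * (θ i + θ (i - 1)) = ϱ :=
  stmt3_general d β γ ϱ θ hrec h1
end

section
/- Let K be a field of characteristic 0, d ≥ 2 an integer, and let θ_i = (i+u)(i+u+1), θ*_i = (i+u*)(i+u*+1), φ_i = i(i-d-1)(i+u+u*-v)(i+u+u*+d+1+v), and ϕ_i = i(i-d-1)(i-u+u*+v)(i-u+u*-d-1-v). Then condition PA3 holds: φ_i = ϕ_1·Σ_{j=0}^{i-1} (θ_j - θ_{d-j})/(θ_0 - θ_d) + (θ*_i - θ*_0)(θ_{i-1} - θ_d) for all 1 ≤ i ≤ d, provided θ_0 ≠ θ_d. -/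
/-! Since θ_m − θ_n = (m − n)(m + n + 2u + 1), every summand (θ_j − θ_{d−j})/(θ_0 − θ_d) equals
(d − 2j)/d, so the sum is i(d − i + 1)/d and PA3 reduces to a polynomial identity in i, d, u, u*, v. -/

open Finset

theorem sum_range_sub_two_mul {R : Type*} [CommRing R] (a : R) (n : ℕ) :
    ∑ j ∈ range n, (a - 2 * (j : R)) = n * (a - n + 1) := by
  induction n with
  | zero => simp
  | succ n ih =>
    rw [sum_range_succ, ih]
    push_cast
    ring

section RacahTheta

variable {K : Type*} [Field K] {u : K} {θ : ℕ → K}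

theorem racah_theta_sub (hθ : ∀ i : ℕ, θ i = ((i : K) + u) * ((i : K) + u + 1)) (m n : ℕ) :
    θ m - θ n = ((m : K) - n) * ((m : K) + n + 2 * u + 1) := by
  rw [hθ, hθ]
  ring

theorem racah_theta_factors_ne_zero (hθ : ∀ i : ℕ, θ i = ((i : K) + u) * ((i : K) + u + 1))
    {d : ℕ} (h0d : θ 0 ≠ θ d) : (d : K) ≠ 0 ∧ (d : K) + 2 * u + 1 ≠ 0 := by
  have h := sub_ne_zero.mpr h0d
  rw [racah_theta_sub hθ, Nat.cast_zero, zero_sub, zero_add] at h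
  exact ⟨neg_ne_zero.mp (left_ne_zero_of_mul h), right_ne_zero_of_mul h⟩

theorem racah_theta_sum_div (hθ : ∀ i : ℕ, θ i = ((i : K) + u) * ((i : K) + u + 1))
    {d i : ℕ} (h0d : θ 0 ≠ θ d) (hi : i ≤ d) :
    ∑ j ∈ range i, (θ j - θ (d - j)) / (θ 0 - θ d) = i * ((d : K) - i + 1) / d := by
  obtain ⟨hd, hu⟩ := racah_theta_factors_ne_zero hθ h0d
  have hterm : ∀ j ∈ range i, (θ j - θ (d - j)) / (θ 0 - θ d) = ((d : K) - 2 * j) / d := by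
    intro j hj
    have hjd : j ≤ d := (mem_range.mp hj).le.trans hi
    rw [racah_theta_sub hθ, racah_theta_sub hθ, Nat.cast_sub hjd, add_sub_cancel,
      Nat.cast_zero, zero_add, mul_div_mul_right _ _ hu, div_eq_div_iff (sub_ne_zero.mpr hd.symm) hd]
    ring
  rw [sum_congr rfl hterm, ← sum_div, sum_range_sub_two_mul]

end RacahTheta

theorem stmt7_general {K : Type*} [Field K] (d : ℕ) (u us v : K)
    (θ θs φ ϕ : ℕ → K)
    (hθ : ∀ i : ℕ, θ i = ((i : K) + u) * ((i : K) + u + 1))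
    (hθs : ∀ i : ℕ, θs i = ((i : K) + us) * ((i : K) + us + 1))
    (hφ : ∀ i : ℕ, φ i = (i : K) * ((i : K) - (d : K) - 1) * ((i : K) + u + us - v)
        * ((i : K) + u + us + (d : K) + 1 + v))
    (hϕ : ∀ i : ℕ, ϕ i = (i : K) * ((i : K) - (d : K) - 1) * ((i : K) - u + us + v)
        * ((i : K) - u + us - (d : K) - 1 - v))
    (h0d : θ 0 ≠ θ d) :
    ∀ i : ℕ, 1 ≤ i → i ≤ d →
      φ i = ϕ 1 * (∑ j ∈ Finset.range i, (θ j - θ (d - j)) / (θ 0 - θ d))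
        + (θs i - θs 0) * (θ (i - 1) - θ d) := by
  intro i h1 hi
  have hd := (racah_theta_factors_ne_zero hθ h0d).1
  rw [racah_theta_sum_div hθ h0d hi, hφ, hϕ, hθs, hθs, hθ, hθ, Nat.cast_sub h1]
  field_simp
  ring

theorem stmt7 {K : Type*} [Field K] [CharZero K] (d : ℕ) (hd : 2 ≤ d) (u us v : K)
    (θ θs φ ϕ : ℕ → K)
    (hθ : ∀ i : ℕ, θ i = ((i : K) + u) * ((i : K) + u + 1))
    (hθs : ∀ i : ℕ, θs i = ((i : K) + us) * ((i : K) + us + 1))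
    (hφ : ∀ i : ℕ, φ i = (i : K) * ((i : K) - (d : K) - 1) * ((i : K) + u + us - v)
        * ((i : K) + u + us + (d : K) + 1 + v))
    (hϕ : ∀ i : ℕ, ϕ i = (i : K) * ((i : K) - (d : K) - 1) * ((i : K) - u + us + v)
        * ((i : K) - u + us - (d : K) - 1 - v))
    (h0d : θ 0 ≠ θ d) :
    ∀ i : ℕ, 1 ≤ i → i ≤ d →
      φ i = ϕ 1 * (∑ j ∈ Finset.range i, (θ j - θ (d - j)) / (θ 0 - θ d))
        + (θs i - θs 0) * (θ (i - 1) - θ d) :=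
  stmt7_general d u us v θ θs φ ϕ hθ hθs hφ hϕ h0d
end

section
/- Let K have characteristic 0 and d ≥ 0. The complete set of solutions (U, U*, V) in K³ of the system -2U-2U*-2V-(d-1)(d+3)/2 = 0, 2(U-(d+1)²/4)(V-U*) = 0, 2(U*-(d+1)²/4)(V-U) = 0 consists of exactly the four triples: ((d+1)²/4, (d+1)²/4, (1-6d-3d²)/4), ((d+1)²/4, (1-6d-3d²)/4, (d+1)²/4), ((1-6d-3d²)/4, (d+1)²/4, (d+1)²/4), and (-(d-1)(d+3)/12, -(d-1)(d+3)/12, -(d-1)(d+3)/12), provided these four triples are distinct. -/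
theorem stmt12 {K : Type*} [Field K] [CharZero K] (d : ℕ)
    (t1 t2 t3 t4 : K × K × K)
    (ht1 : t1 = (((d : K) + 1) ^ 2 / 4, ((d : K) + 1) ^ 2 / 4,
        (1 - 6 * (d : K) - 3 * (d : K) ^ 2) / 4))
    (ht2 : t2 = (((d : K) + 1) ^ 2 / 4, (1 - 6 * (d : K) - 3 * (d : K) ^ 2) / 4,
        ((d : K) + 1) ^ 2 / 4))
    (ht3 : t3 = ((1 - 6 * (d : K) - 3 * (d : K) ^ 2) / 4, ((d : K) + 1) ^ 2 / 4,
        ((d : K) + 1) ^ 2 / 4))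
    (ht4 : t4 = (-(((d : K) - 1) * ((d : K) + 3)) / 12,
        -(((d : K) - 1) * ((d : K) + 3)) / 12, -(((d : K) - 1) * ((d : K) + 3)) / 12))
    (hdist : t1 ≠ t2 ∧ t1 ≠ t3 ∧ t1 ≠ t4 ∧ t2 ≠ t3 ∧ t2 ≠ t4 ∧ t3 ≠ t4) :
    ∀ U Us V : K,
      (-2 * U - 2 * Us - 2 * V - ((d : K) - 1) * ((d : K) + 3) / 2 = 0 ∧
       2 * (U - ((d : K) + 1) ^ 2 / 4) * (V - Us) = 0 ∧
       2 * (Us - ((d : K) + 1) ^ 2 / 4) * (V - U) = 0) ↔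
      ((U, Us, V) = t1 ∨ (U, Us, V) = t2 ∨ (U, Us, V) = t3 ∨ (U, Us, V) = t4) := by
  subst ht1 ht2 ht3 ht4
  intro U Us V
  constructor
  · rintro ⟨h1, h2, h3⟩
    have h2' : U - ((d : K) + 1) ^ 2 / 4 = 0 ∨ V - Us = 0 := by
      rcases mul_eq_zero.mp h2 with h | h
      · left
        have : (2 : K) ≠ 0 := two_ne_zero
        rcases mul_eq_zero.mp h with h' | h'
        · exact absurd h' this
        · exact h'
      · right; exact h
    have h3' : Us - ((d : K) + 1) ^ 2 / 4 = 0 ∨ V - U = 0 := by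
      rcases mul_eq_zero.mp h3 with h | h
      · left
        have : (2 : K) ≠ 0 := two_ne_zero
        rcases mul_eq_zero.mp h with h' | h'
        · exact absurd h' this
        · exact h'
      · right; exact h
    rcases h2' with hU | hVUs <;> rcases h3' with hUs | hVU
    · left
      simp only [Prod.mk.injEq]
      refine ⟨by linear_combination hU, by linear_combination hUs,
        by linear_combination (-1/2 : K) * h1 - hU - hUs⟩
    · right; left
      simp only [Prod.mk.injEq]
      refine ⟨by linear_combination hU,
        by linear_combination (-1/2 : K) * h1 - hVU - 2 * hU,
        by linear_combination hVU + hU⟩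
    · right; right; left
      simp only [Prod.mk.injEq]
      refine ⟨by linear_combination (-1/2 : K) * h1 - hVUs - 2 * hUs,
        by linear_combination hUs, by linear_combination hVUs + hUs⟩
    · right; right; right
      simp only [Prod.mk.injEq]
      refine ⟨by linear_combination (-1/6 : K) * h1 + (1/3 : K) * hVUs - (2/3 : K) * hVU,
        by linear_combination (-1/6 : K) * h1 - (2/3 : K) * hVUs + (1/3 : K) * hVU,
        by linear_combination (-1/6 : K) * h1 + (1/3 : K) * hVUs + (1/3 : K) * hVU⟩
  · rintro (h | h | h | h) <;>
      (simp only [Prod.ext_iff] at h; obtain ⟨hU, hUs, hV⟩ := h;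
       subst hU hUs hV; refine ⟨by ring, by ring, by ring⟩)
end
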